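/- Let (A, ·, P, ω) be a Rota-Baxter associative algebra of weight λ with a nondegenerate commutative Connes cocycle ω satisfying ω(P(x),y) + ω(x,P(y)) + λω(x,y) = 0. Let (A, ≻, ≺) be the compatible anti-dendriform algebra defined by ω(x≻y,z) = -ω(y,z·x), ω(x≺y,z) = -ω(x,y·z). Then P is a Rota-Baxter operator of weight λ on (A, ≻, ≺): P(x)≻P(y) = P(P(x)≻y + x≻P(y) + λ x≻y) and P(x)≺P(y) = P(P(x)≺y + x≺P(y) + λ x≺y) for all x,y ∈ A. -/
import Mathlib


open TensorProduct

set_option synthInstance.maxHeartbeats 1000000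
set_option maxHeartbeats 1600000

variable {K : Type*} [Field K]

/-- The anti-dendriform algebra identities for two bilinear operations `s` (≻) and `p` (≺):
`x≻(y≻z) = -(x·y)≻z = -x≺(y·z) = (x≺y)≺z` and `(x≻y)≺z = x≻(y≺z)`, where `x·y = x≻y + x≺y`. -/
def IsAntiDend {M : Type*} [AddCommGroup M] [Module K M]
    (s p : M →ₗ[K] M →ₗ[K] M) : Prop :=
  ∀ x y z : M,
    s x (s y z) = - s (s x y + p x y) z ∧
    s x (s y z) = - p x (s y z + p y z) ∧
    s x (s y z) = p (p x y) z ∧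
    p (s x y) z = s x (p y z)

variable {A : Type*} [AddCommGroup A] [Module K A]

/-- if `(A, ·, P, ω)` is a Rota-Baxter associative algebra of weight `λ`
with a nondegenerate commutative Connes cocycle satisfying
`ω(Px, y) + ω(x, Py) + λω(x, y) = 0`, and `≻, ≺` is the compatible anti-dendriform
structure defined by `ω(x≻y, z) = -ω(y, z·x)`, `ω(x≺y, z) = -ω(x, y·z)`, then `P` is a
Rota-Baxter operator of weight `λ` on `(A, ≻, ≺)`. -/
theorem stmt17 (mul : A →ₗ[K] A →ₗ[K] A)
    (hassoc : ∀ x y z : A, mul (mul x y) z = mul x (mul y z))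
    (ω : A →ₗ[K] A →ₗ[K] K)
    (hsym : ∀ x y : A, ω x y = ω y x)
    (hnd : Function.Bijective fun x : A => (ω x : Module.Dual K A))
    (hcoc : ∀ x y z : A, ω (mul x y) z + ω (mul y z) x + ω (mul z x) y = 0)
    (P : A →ₗ[K] A) (lam : K)
    (hRB : ∀ x y : A, mul (P x) (P y) = P (mul (P x) y + mul x (P y) + lam • mul x y))
    (hcomp : ∀ x y : A, ω (P x) y + ω x (P y) + lam * ω x y = 0)
    (s q : A →ₗ[K] A →ₗ[K] A)
    (hs : ∀ x y z : A, ω (s x y) z = - ω y (mul z x))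
    (hq : ∀ x y z : A, ω (q x y) z = - ω x (mul y z)) :
    ∀ x y : A,
      s (P x) (P y) = P (s (P x) y + s x (P y) + lam • s x y) ∧
      q (P x) (P y) = P (q (P x) y + q x (P y) + lam • q x y) := by
  intro x y
  have key : ∀ a b : A, (∀ z, ω a z = ω b z) → a = b := fun a b h =>
    hnd.injective (LinearMap.ext h)
  constructor
  · apply key
    intro z
    have E11 := congrArg (fun w => ω y w) (hRB z x)
    simp only [map_add, map_smul, LinearMap.add_apply, LinearMap.smul_apply,
      smul_eq_mul] at E11 ⊢
    linear_combination hs (P x) (P y) z - hcomp (s (P x) y) z - hcomp (s x (P y)) z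
      - lam * hcomp (s x y) z + hs (P x) y (P z) + hs x (P y) (P z)
      + lam * hs x y (P z) + lam * hs (P x) y z + lam * hs x (P y) z
      + lam ^ 2 * hs x y z - E11 - hcomp y (mul (P z) x) - hcomp y (mul z (P x))
      - lam * hcomp y (mul z x)
  · apply key
    intro z
    have E11 := congrArg (fun w => ω x w) (hRB y z)
    simp only [map_add, map_smul, LinearMap.add_apply, LinearMap.smul_apply,
      smul_eq_mul] at E11 ⊢
    linear_combination hq (P x) (P y) z - hcomp (q (P x) y) z - hcomp (q x (P y)) z
      - lam * hcomp (q x y) z + hq (P x) y (P z) + hq x (P y) (P z)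
      + lam * hq x y (P z) + lam * hq (P x) y z + lam * hq x (P y) z
      + lam ^ 2 * hq x y z - E11 - hcomp x (mul (P y) z) - hcomp x (mul y (P z))
      - lam * hcomp x (mul y z)
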